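/- arXiv:1009.0118 — 3 statements merged into one kernel-verified Lean document; each statement's English description precedes it below -/
import Mathlib

section
/- For every real x > 0 and every integer n ≥ 1: the sum, over all tuples (a_1, …, a_n) ∈ ℕⁿ satisfying ∑_{k=1}^n k·a_k = n, of ∏_{k=1}^n (x/k)^{a_k} / (a_k!) equals x(x+1)(x+2)⋯(x+n−1) / n!. -/
open Finset

private noncomputable def wgt (x : ℝ) {N : ℕ} (a : Fin N → ℕ) : ℝ :=
  ∏ k : Fin N, (x / (k.1 + 1)) ^ (a k) / (Nat.factorial (a k))

private def cfgs (N n : ℕ) : Finset (Fin N → ℕ) :=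
  (Fintype.piFinset fun _ => Finset.range (n + 1)).filter
    fun a => ∑ k : Fin N, (k.1 + 1) * a k = n

private lemma mem_cfgs {N n : ℕ} {a : Fin N → ℕ} :
    a ∈ cfgs N n ↔ ∑ k : Fin N, (k.1 + 1) * a k = n := by
  constructor
  · exact fun h => (Finset.mem_filter.mp h).2
  · intro h
    refine Finset.mem_filter.mpr ⟨Fintype.mem_piFinset.mpr fun k => ?_, h⟩
    have hle : (k.1 + 1) * a k ≤ n := by
      rw [← h]
      exact Finset.single_le_sum (f := fun k : Fin N => (k.1 + 1) * a k)
        (fun _ _ => Nat.zero_le _) (Finset.mem_univ k)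
    have : a k ≤ n := le_trans (Nat.le_mul_of_pos_left _ (Nat.succ_pos _)) hle
    exact Finset.mem_range.mpr (Nat.lt_succ_of_le this)

private noncomputable def Qe (x : ℝ) (N n : ℕ) : ℝ := ∑ a ∈ cfgs N n, wgt x a

private lemma Qe_zero (x : ℝ) (N : ℕ) : Qe x N 0 = 1 := by
  have hc : cfgs N 0 = {fun _ => 0} := by
    ext a
    simp only [mem_cfgs, Finset.mem_singleton]
    constructor
    · intro h
      funext k
      have := (Finset.sum_eq_zero_iff.mp h) k (Finset.mem_univ k)
      simpa using this
    · intro h; subst h; simp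
  simp [Qe, hc, wgt]

private lemma sum_update_key {N : ℕ} (a : Fin N → ℕ) (k : Fin N) (m : ℕ) :
    ∑ j : Fin N, (j.1 + 1) * Function.update a k m j
      = (k.1 + 1) * m + ∑ j ∈ Finset.univ.erase k, (j.1 + 1) * a j := by
  have h : (fun j : Fin N => (j.1 + 1) * Function.update a k m j)
      = Function.update (fun j : Fin N => (j.1 + 1) * a j) k ((k.1 + 1) * m) := by
    funext j
    by_cases hj : j = k
    · subst hj; simp
    · simp [Function.update_apply, hj]
  rw [h, Finset.sum_update_of_mem (Finset.mem_univ k), Finset.sdiff_singleton_eq_erase]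

private lemma sum_split {N : ℕ} (a : Fin N → ℕ) (k : Fin N) :
    ∑ j : Fin N, (j.1 + 1) * a j
      = (k.1 + 1) * a k + ∑ j ∈ Finset.univ.erase k, (j.1 + 1) * a j := by
  rw [← Finset.add_sum_erase _ _ (Finset.mem_univ k)]

private lemma sum_count (x : ℝ) {N n : ℕ} (k : Fin N) (hk : k.1 + 1 ≤ n) :
    ∑ a ∈ cfgs N n, (a k : ℝ) * wgt x a
      = (x / (k.1 + 1)) * Qe x N (n - (k.1 + 1)) := by
  classical
  rw [← Finset.sum_filter_of_ne (p := fun a => a k ≠ 0)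
    (by intro a _ h h0; exact h (by simp [h0]))]
  rw [Qe, Finset.mul_sum]
  refine Finset.sum_nbij' (i := fun a => Function.update a k (a k - 1))
    (j := fun b => Function.update b k (b k + 1)) ?_ ?_ ?_ ?_ ?_
  · intro a ha
    simp only [Finset.mem_filter, mem_cfgs] at ha
    obtain ⟨⟨hsum, _⟩, hak⟩ := ha
    rw [mem_cfgs, sum_update_key]
    have hsplit := sum_split a k
    have hB : k.1 + 1 ≤ (k.1 + 1) * a k := Nat.le_mul_of_pos_right _ (Nat.pos_of_ne_zero hak)
    have hmp : (k.1 + 1) * (a k - 1) = (k.1 + 1) * a k - (k.1 + 1) := by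
      cases' Nat.exists_eq_succ_of_ne_zero hak with m hm
      rw [hm]; simp [Nat.mul_succ]
    omega
  · intro b hb
    rw [mem_cfgs] at hb
    simp only [Finset.mem_filter, mem_cfgs]
    have hsplit := sum_split b k
    constructor
    · rw [sum_update_key]
      have : (k.1 + 1) * (b k + 1) = (k.1 + 1) * b k + (k.1 + 1) := by ring
      omega
    · simp
  · intro a ha
    simp only [Finset.mem_filter] at ha
    have hak := ha.2
    funext j
    by_cases hj : j = k
    · subst hj; simp [Function.update_apply]; omega
    · simp [Function.update_apply, hj]
  · intro b _
    funext j
    by_cases hj : j = k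
    · subst hj; simp [Function.update_apply]
    · simp [Function.update_apply, hj]
  · intro a ha
    simp only [Finset.mem_filter] at ha
    have hak : a k ≠ 0 := ha.2
    obtain ⟨m, hm⟩ := Nat.exists_eq_succ_of_ne_zero hak
    unfold wgt
    rw [← Finset.mul_prod_erase _ _ (Finset.mem_univ k),
        ← Finset.mul_prod_erase _ _ (Finset.mem_univ k)]
    have hrest : ∏ j ∈ Finset.univ.erase k, (x / (j.1 + 1)) ^ (Function.update a k (a k - 1) j) / (Nat.factorial (Function.update a k (a k - 1) j))
        = ∏ j ∈ Finset.univ.erase k, (x / (j.1 + 1)) ^ (a j) / (Nat.factorial (a j)) := by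
      refine Finset.prod_congr rfl fun j hj => ?_
      have : j ≠ k := (Finset.mem_erase.mp hj).1
      simp [Function.update_apply, this]
    rw [hrest]
    beta_reduce
    have hupd : Function.update a k (a k - 1) k = m := by simp [hm]
    rw [hupd, hm]
    have hfac : (Nat.factorial (m + 1) : ℝ) = (m + 1) * Nat.factorial m := by
      push_cast [Nat.factorial_succ]; ring
    have hfacne : (Nat.factorial m : ℝ) ≠ 0 := Nat.cast_ne_zero.mpr (Nat.factorial_ne_zero m)
    rw [hfac]
    push_cast
    rw [pow_succ]
    field_simp

private lemma Qe_rec (x : ℝ) {N n : ℕ} (hnN : n ≤ N) :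
    (n : ℝ) * Qe x N n = x * ∑ j ∈ Finset.range n, Qe x N j := by
  classical
  have step1 : (n : ℝ) * Qe x N n
      = ∑ k : Fin N, ∑ a ∈ cfgs N n, ((k.1 + 1) * a k : ℕ) * wgt x a := by
    rw [Qe, Finset.mul_sum, Finset.sum_comm]
    refine Finset.sum_congr rfl fun a ha => ?_
    rw [← Finset.sum_mul]
    congr 1
    rw [mem_cfgs] at ha
    rw [← ha]
    push_cast
    rfl
  rw [step1]
  have step2 : ∀ k : Fin N,
      ∑ a ∈ cfgs N n, ((k.1 + 1) * a k : ℕ) * wgt x a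
        = if k.1 + 1 ≤ n then x * Qe x N (n - (k.1 + 1)) else 0 := by
    intro k
    by_cases hk : k.1 + 1 ≤ n
    · rw [if_pos hk]
      have : ∑ a ∈ cfgs N n, ((k.1 + 1) * a k : ℕ) * wgt x a
          = ((k.1 : ℝ) + 1) * ∑ a ∈ cfgs N n, (a k : ℝ) * wgt x a := by
        rw [Finset.mul_sum]
        refine Finset.sum_congr rfl fun a _ => ?_
        push_cast; ring
      rw [this, sum_count x k hk]
      have hne : ((k.1 : ℝ) + 1) ≠ 0 := by positivity
      field_simp
    · rw [if_neg hk]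
      refine Finset.sum_eq_zero fun a ha => ?_
      rw [mem_cfgs] at ha
      have hle : (k.1 + 1) * a k ≤ n := by
        rw [← ha]
        exact Finset.single_le_sum (f := fun k : Fin N => (k.1 + 1) * a k)
          (fun _ _ => Nat.zero_le _) (Finset.mem_univ k)
      have : a k = 0 := by
        by_contra h0
        have := Nat.le_mul_of_pos_right (k.1 + 1) (Nat.pos_of_ne_zero h0)
        omega
      simp [this]
  rw [Finset.sum_congr rfl fun k _ => step2 k]
  have step3 : ∑ k : Fin N, (if k.1 + 1 ≤ n then x * Qe x N (n - (k.1 + 1)) else 0)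
      = ∑ k ∈ Finset.range N, (if k + 1 ≤ n then x * Qe x N (n - (k + 1)) else 0) := by
    exact Fin.sum_univ_eq_sum_range (fun k => if k + 1 ≤ n then x * Qe x N (n - (k + 1)) else 0) N
  rw [step3]
  rw [← Finset.sum_subset (Finset.range_subset_range.mpr hnN)
    (by intro k _ hk; rw [Finset.mem_range] at hk; rw [if_neg]; omega)]
  have step4 : ∑ k ∈ Finset.range n, (if k + 1 ≤ n then x * Qe x N (n - (k + 1)) else 0)
      = ∑ k ∈ Finset.range n, x * Qe x N (n - 1 - k) := by
    refine Finset.sum_congr rfl fun k hk => ?_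
    rw [Finset.mem_range] at hk
    rw [if_pos (by omega)]
    congr 2
    omega
  rw [step4, Finset.sum_range_reflect (fun j => x * Qe x N j) n, ← Finset.mul_sum]

private noncomputable def rfac (x : ℝ) (n : ℕ) : ℝ := (∏ i ∈ Finset.range n, (x + i)) / Nat.factorial n

private lemma rfac_rec (x : ℝ) (n : ℕ) :
    x * ∑ j ∈ Finset.range n, rfac x j = (n : ℝ) * rfac x n := by
  induction n with
  | zero => simp
  | succ n ih =>
    rw [Finset.sum_range_succ, mul_add, ih]
    have hfac : (Nat.factorial (n + 1) : ℝ) = (n + 1) * Nat.factorial n := by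
      push_cast [Nat.factorial_succ]; ring
    have hfacne : (Nat.factorial n : ℝ) ≠ 0 := Nat.cast_ne_zero.mpr (Nat.factorial_ne_zero n)
    unfold rfac
    rw [Finset.prod_range_succ, hfac]
    push_cast
    field_simp
    ring

private lemma Qe_eq_rfac (x : ℝ) : ∀ n N : ℕ, n ≤ N → Qe x N n = rfac x n := by
  intro n
  induction n using Nat.strong_induction_on with
  | _ n ih =>
    intro N hnN
    rcases Nat.eq_zero_or_pos n with h0 | hpos
    · subst h0; rw [Qe_zero]; simp [rfac]
    · have hrec := Qe_rec x hnN
      have hsum : ∑ j ∈ Finset.range n, Qe x N j = ∑ j ∈ Finset.range n, rfac x j := by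
        refine Finset.sum_congr rfl fun j hj => ?_
        rw [Finset.mem_range] at hj
        exact ih j hj N (by omega)
      have hne : (n : ℝ) ≠ 0 := Nat.cast_ne_zero.mpr (by omega)
      have := rfac_rec x n
      rw [hsum, this] at hrec
      exact mul_left_cancel₀ hne hrec

/-- normalization identity underlying Ewens' sampling formula:
for `x > 0` and `n ≥ 1`, the sum over abundance configurations
`(a_1, …, a_n)` with `∑ k·a_k = n` of `∏ (x/k)^{a_k}/a_k!` equals
`x(x+1)⋯(x+n−1)/n!`. -/
theorem ewens_normalization (x : ℝ) (hx : 0 < x) (n : ℕ) (hn : 1 ≤ n) :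
    ∑' a : {a : Fin n → ℕ // ∑ k : Fin n, (k.1 + 1) * a k = n},
        (∏ k : Fin n, (x / (k.1 + 1)) ^ (a.1 k) / (Nat.factorial (a.1 k)))
      = (∏ i ∈ Finset.range n, (x + i)) / n.factorial := by
  classical
  have h1 : ∑' a : {a : Fin n → ℕ // ∑ k : Fin n, (k.1 + 1) * a k = n},
        (∏ k : Fin n, (x / (k.1 + 1)) ^ (a.1 k) / (Nat.factorial (a.1 k)))
      = ∑' b : {a // a ∈ cfgs n n}, wgt x b.1 :=
    (Equiv.subtypeEquivRight (q := fun a => a ∈ cfgs n n) (fun a => mem_cfgs.symm)).tsum_eq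
      (fun b : {a // a ∈ cfgs n n} => wgt x b.1)
  rw [h1, Finset.tsum_subtype (cfgs n n) (fun a => wgt x a)]
  exact Qe_eq_rfac x n n le_rfl
end

section
/- Let γ > 0, α ∈ (0,1) and n ≥ 1. Let μ be the product probability measure on ℕⁿ whose k-th factor (k = 1, …, n) is the Poisson distribution with mean γ α^k / k. Then for every a = (a_1, …, a_n) ∈ ℕⁿ with ∑_{k=1}^n k·a_k = n, the conditional probability μ({a}) / μ({b ∈ ℕⁿ : ∑_{k=1}^n k·b_k = n}) equals (n! / (γ(γ+1)⋯(γ+n−1))) · ∏_{k=1}^n (γ/k)^{a_k} / a_k!. In particular, this conditional distribution does not depend on α: it is the Ewens sampling formula with parameter γ. -/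
open MeasureTheory Finset

namespace EwensAux

/-- finite set of multiplicity vectors of weight `m` -/
def T (N m : ℕ) : Finset (Fin N → ℕ) :=
  (Fintype.piFinset fun _ => Finset.range (m + 1)).filter fun b => ∑ k, (k.1 + 1) * b k = m

lemma mem_T {N m : ℕ} {b : Fin N → ℕ} : b ∈ T N m ↔ ∑ k, (k.1 + 1) * b k = m := by
  constructor
  · exact fun h => (Finset.mem_filter.1 h).2
  · intro h
    have hb : ∀ k, b k < m + 1 := by
      intro k
      have h1 : (k.1 + 1) * b k ≤ m := h ▸ Finset.single_le_sum
        (f := fun k : Fin N => (k.1 + 1) * b k) (fun _ _ => Nat.zero_le _) (Finset.mem_univ k)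
      have h2 : b k ≤ (k.1 + 1) * b k := Nat.le_mul_of_pos_left _ (Nat.succ_pos _)
      omega
    exact Finset.mem_filter.2 ⟨Fintype.mem_piFinset.2 fun k => Finset.mem_range.2 (hb k), h⟩

noncomputable def t (lam : ℕ → ℝ) {N : ℕ} (b : Fin N → ℕ) : ℝ :=
  ∏ k, lam (k.1 + 1) ^ b k / (b k).factorial

noncomputable def c (lam : ℕ → ℝ) (N m : ℕ) : ℝ := ∑ b ∈ T N m, t lam b

lemma T_zero (N : ℕ) : T N 0 = {fun _ => 0} := by
  ext b
  rw [mem_T, Finset.mem_singleton]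
  constructor
  · intro h
    funext k
    have h1 := (Finset.sum_eq_zero_iff.1 h) k (Finset.mem_univ k)
    have h2 := Nat.mul_eq_zero.1 h1
    omega
  · intro h; subst h; simp

lemma c_zero (lam : ℕ → ℝ) (N : ℕ) : c lam N 0 = 1 := by
  rw [c, T_zero, Finset.sum_singleton, t]
  simp


lemma weight_update {N : ℕ} (b : Fin N → ℕ) (k : Fin N) (v : ℕ) :
    ∑ j, (j.1 + 1) * Function.update b k v j
      = (k.1 + 1) * v + ∑ j ∈ Finset.univ \ {k}, (j.1 + 1) * b j := by
  have hfun : (fun j : Fin N => (j.1 + 1) * Function.update b k v j)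
      = Function.update (fun j : Fin N => (j.1 + 1) * b j) k ((k.1 + 1) * v) := by
    funext j
    rcases eq_or_ne j k with h | h
    · subst h; simp
    · simp [Function.update_of_ne h]
  rw [hfun, Finset.sum_update_of_mem (Finset.mem_univ k)]

lemma weight_split {N : ℕ} (b : Fin N → ℕ) (k : Fin N) :
    ∑ j, (j.1 + 1) * b j = (k.1 + 1) * b k + ∑ j ∈ Finset.univ \ {k}, (j.1 + 1) * b j := by
  have := weight_update b k (b k)
  rwa [Function.update_eq_self] at this

lemma t_update (lam : ℕ → ℝ) {N : ℕ} (b : Fin N → ℕ) (k : Fin N) (v : ℕ) :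
    t lam (Function.update b k v)
      = (lam (k.1 + 1) ^ v / v.factorial)
        * ∏ j ∈ Finset.univ \ {k}, lam (j.1 + 1) ^ b j / (b j).factorial := by
  have hfun : (fun j : Fin N => lam (j.1 + 1) ^ Function.update b k v j
        / (Function.update b k v j).factorial)
      = Function.update (fun j : Fin N => lam (j.1 + 1) ^ b j / (b j).factorial) k
          (lam (k.1 + 1) ^ v / v.factorial) := by
    funext j
    rcases eq_or_ne j k with h | h
    · subst h; simp
    · simp [Function.update_of_ne h]
  rw [t, hfun, Finset.prod_update_of_mem (Finset.mem_univ k)]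

lemma t_split (lam : ℕ → ℝ) {N : ℕ} (b : Fin N → ℕ) (k : Fin N) :
    t lam b = (lam (k.1 + 1) ^ b k / (b k).factorial)
        * ∏ j ∈ Finset.univ \ {k}, lam (j.1 + 1) ^ b j / (b j).factorial := by
  have := t_update lam b k (b k)
  rwa [Function.update_eq_self] at this

lemma key (lam : ℕ → ℝ) (N m : ℕ) :
    (m : ℝ) * c lam N m
      = ∑ k ∈ Finset.univ.filter fun k : Fin N => k.1 + 1 ≤ m,
          (((k.1 + 1 : ℕ) : ℝ) * lam (k.1 + 1)) * c lam N (m - (k.1 + 1)) := by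
  rw [c, Finset.mul_sum]
  have step1 : ∀ b ∈ T N m,
      (m : ℝ) * t lam b = ∑ k : Fin N, (((k.1 + 1) * b k : ℕ) : ℝ) * t lam b := by
    intro b hb
    rw [← Finset.sum_mul]
    congr 1
    rw [← mem_T.1 hb]
    push_cast
    ring
  rw [Finset.sum_congr rfl step1, Finset.sum_comm]
  refine (Finset.sum_subset (Finset.filter_subset _ _) ?_).symm.trans
    (Finset.sum_congr rfl ?_)
  · -- terms with ¬ (k+1 ≤ m) vanish
    intro k _ hk
    rw [Finset.mem_filter] at hk
    push_neg at hk
    have hk' : m < k.1 + 1 := by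
      have := hk (Finset.mem_univ k); omega
    apply Finset.sum_eq_zero
    intro b hb
    have h1 : (k.1 + 1) * b k ≤ m := (mem_T.1 hb) ▸ Finset.single_le_sum
      (f := fun k : Fin N => (k.1 + 1) * b k) (fun _ _ => Nat.zero_le _) (Finset.mem_univ k)
    have hbk : b k = 0 := by
      by_contra hne
      have h2 : k.1 + 1 ≤ (k.1 + 1) * b k :=
        Nat.le_mul_of_pos_right _ (Nat.pos_of_ne_zero hne)
      omega
    simp [hbk]
  · -- main case : k+1 ≤ m
    intro k hk
    have hkm : k.1 + 1 ≤ m := (Finset.mem_filter.1 hk).2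
    -- restrict to b with b k ≠ 0
    rw [← Finset.sum_filter_of_ne (p := fun b : Fin N → ℕ => b k ≠ 0)
      (fun b _ hne => by
        intro h0
        rw [h0] at hne
        simp at hne)]
    rw [c, Finset.mul_sum]
    refine Finset.sum_nbij' (i := fun b => Function.update b k (b k - 1))
      (j := fun b => Function.update b k (b k + 1)) ?_ ?_ ?_ ?_ ?_
    · intro b hb
      rw [Finset.mem_filter, mem_T] at hb
      obtain ⟨hb1, hb2⟩ := hb
      obtain ⟨s, hs⟩ : ∃ s, b k = s + 1 := ⟨b k - 1, by omega⟩
      rw [mem_T, weight_update]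
      have h3 := weight_split b k
      rw [hb1] at h3
      have h4 : (k.1 + 1) * (s + 1) = (k.1 + 1) * s + (k.1 + 1) := by ring
      rw [hs] at h3 ⊢
      simp only [Nat.add_sub_cancel]
      omega
    · intro b hb
      rw [mem_T] at hb
      rw [Finset.mem_filter, mem_T]
      refine ⟨?_, by simp⟩
      rw [weight_update]
      have h3 := weight_split b k
      rw [hb] at h3
      have h4 : (k.1 + 1) * (b k + 1) = (k.1 + 1) * b k + (k.1 + 1) := by ring
      omega
    · intro b hb
      rw [Finset.mem_filter] at hb
      have hne := hb.2
      funext j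
      rcases eq_or_ne j k with h | h
      · subst h; simp; omega
      · simp [Function.update_of_ne h]
    · intro b hb
      funext j
      rcases eq_or_ne j k with h | h
      · subst h; simp
      · simp [Function.update_of_ne h]
    · intro b hb
      rw [Finset.mem_filter] at hb
      obtain ⟨s, hs⟩ : ∃ s, b k = s + 1 := ⟨b k - 1, by omega⟩
      rw [t_split lam b k, t_update, hs]
      simp only [Nat.add_sub_cancel]
      rw [Nat.factorial_succ, pow_succ]
      push_cast
      have hfac : (s.factorial : ℝ) ≠ 0 := Nat.cast_ne_zero.2 s.factorial_ne_zero
      field_simp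


noncomputable def d (γ : ℝ) (m : ℕ) : ℝ := (∏ i ∈ Finset.range m, (γ + i)) / m.factorial

lemma d_succ (γ : ℝ) (m : ℕ) : d γ (m + 1) * ((m : ℝ) + 1) = d γ m * (γ + m) := by
  have h1 : ((m : ℝ) + 1) ≠ 0 := by positivity
  have h2 : (m.factorial : ℝ) ≠ 0 := Nat.cast_ne_zero.2 m.factorial_ne_zero
  rw [d, d, Finset.prod_range_succ, Nat.factorial_succ]
  push_cast
  field_simp

lemma d_rec (γ : ℝ) : ∀ m : ℕ, (m : ℝ) * d γ m = γ * ∑ j ∈ Finset.range m, d γ j := by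
  intro m
  induction m with
  | zero => simp
  | succ m ih =>
    rw [Finset.sum_range_succ, mul_add, ← ih]
    push_cast
    linear_combination d_succ γ m

lemma c_eq (γ α : ℝ) (N : ℕ) :
    ∀ m, m ≤ N → c (fun j => γ * α ^ j / j) N m = α ^ m * d γ m := by
  intro m
  induction m using Nat.strong_induction_on with
  | _ m ih =>
    intro hmN
    rcases Nat.eq_zero_or_pos m with rfl | hm
    · simp [c_zero, d]
    · set lam : ℕ → ℝ := fun j => γ * α ^ j / j with hlam
      have hkey := key lam N m
      have hconv : ∀ F : ℕ → ℝ,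
          (∑ k ∈ Finset.univ.filter fun k : Fin N => k.1 + 1 ≤ m, F (k.1 + 1))
            = ∑ i ∈ Finset.range m, F (i + 1) := by
        intro F
        rw [Finset.sum_filter,
          Fin.sum_univ_eq_sum_range (fun i => if i + 1 ≤ m then F (i + 1) else 0) N,
          ← Finset.sum_filter]
        congr 1
        ext i
        simp only [Finset.mem_filter, Finset.mem_range]
        omega
      rw [hconv (fun j => (j : ℝ) * lam j * c lam N (m - j))] at hkey
      have hterm : ∀ i ∈ Finset.range m,
          ((i + 1 : ℕ) : ℝ) * lam (i + 1) * c lam N (m - (i + 1))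
            = γ * α ^ m * d γ (m - (i + 1)) := by
        intro i hi
        have him : i < m := Finset.mem_range.1 hi
        have h1 : c lam N (m - (i + 1)) = α ^ (m - (i + 1)) * d γ (m - (i + 1)) :=
          ih (m - (i + 1)) (by omega) (by omega)
        have h2 : ((i + 1 : ℕ) : ℝ) ≠ 0 := by positivity
        have h3 : α ^ (i + 1) * α ^ (m - (i + 1)) = α ^ m := by
          rw [← pow_add]
          congr 1
          omega
        have h4 : ((i + 1 : ℕ) : ℝ) * (γ * α ^ (i + 1) / ((i + 1 : ℕ) : ℝ))
            = γ * α ^ (i + 1) := by field_simp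
        rw [h1]
        simp only [hlam]
        rw [h4, ← h3]
        ring
      rw [Finset.sum_congr rfl hterm, ← Finset.mul_sum] at hkey
      have hrefl : ∑ i ∈ Finset.range m, d γ (m - (i + 1)) = ∑ j ∈ Finset.range m, d γ j := by
        rw [← Finset.sum_range_reflect (fun j => d γ j) m]
        exact Finset.sum_congr rfl fun i hi => by congr 1; omega
      rw [hrefl] at hkey
      have hd : γ * α ^ m * ∑ j ∈ Finset.range m, d γ j = α ^ m * ((m : ℝ) * d γ m) := by
        rw [d_rec]
        ring
      rw [hd] at hkey
      have hm0 : (m : ℝ) ≠ 0 := Nat.cast_ne_zero.2 (by omega)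
      apply mul_left_cancel₀ hm0
      rw [hkey]
      ring

end EwensAux

open EwensAux

/-- Corollary 1 of the paper: let `μ` be the product measure on `ℕⁿ`
whose `k`-th factor is Poisson with mean `γ α^k / k` (`k = 1, …, n`). Conditioning on
`∑ k·a_k = n` yields the Ewens sampling formula with parameter `γ`, independent
of `α`. -/
theorem conditioned_poisson_is_ewens
    (γ α : ℝ) (hγ : 0 < γ) (hα : α ∈ Set.Ioo (0:ℝ) 1) (n : ℕ) (hn : 1 ≤ n)
    (ν : Fin n → Measure ℕ) [∀ k, IsProbabilityMeasure (ν k)]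
    (hν : ∀ (k : Fin n) (m : ℕ), ν k {m}
      = ENNReal.ofReal (Real.exp (-(γ * α ^ (k.1 + 1) / (k.1 + 1)))
          * (γ * α ^ (k.1 + 1) / (k.1 + 1)) ^ m / m.factorial))
    (μ : Measure (Fin n → ℕ)) (hμ : μ = Measure.pi ν) :
    ∀ a : Fin n → ℕ, (∑ k : Fin n, (k.1 + 1) * a k) = n →
      μ {a} / μ {b : Fin n → ℕ | (∑ k : Fin n, (k.1 + 1) * b k) = n}
        = ENNReal.ofReal ((n.factorial : ℝ) / (∏ i ∈ Finset.range n, (γ + i))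
            * ∏ k : Fin n, (γ / (k.1 + 1)) ^ (a k) / (Nat.factorial (a k))) := by
  intro a ha
  obtain ⟨hα0, hα1⟩ := hα
  set lam : ℕ → ℝ := fun j => γ * α ^ j / j with hlam
  have hlamnn : ∀ j : ℕ, 0 ≤ lam j := fun j =>
    div_nonneg (mul_nonneg hγ.le (pow_nonneg hα0.le _)) (Nat.cast_nonneg _)
  have htnn : ∀ b : Fin n → ℕ, 0 ≤ t lam b := by
    intro b
    exact Finset.prod_nonneg fun k _ =>
      div_nonneg (pow_nonneg (hlamnn _) _) (Nat.cast_nonneg _)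
  set E : ℝ := ∏ k : Fin n, Real.exp (-(lam (k.1 + 1))) with hEdef
  have hEpos : 0 < E := Finset.prod_pos fun k _ => Real.exp_pos _
  have hsingle : ∀ b : Fin n → ℕ, μ {b} = ENNReal.ofReal (E * t lam b) := by
    intro b
    rw [hμ, ← Set.univ_pi_singleton b, Measure.pi_pi]
    have hstep : ∀ k : Fin n, ν k {b k}
        = ENNReal.ofReal (Real.exp (-(lam (k.1 + 1)))
            * (lam (k.1 + 1) ^ b k / ((b k).factorial : ℝ))) := by
      intro k
      have hl : lam (k.1 + 1) = γ * α ^ (k.1 + 1) / ((k.1 : ℝ) + 1) := by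
        rw [hlam]; push_cast; ring
      rw [hν k (b k), hl, mul_div_assoc]
    rw [Finset.prod_congr rfl fun k _ => hstep k, ← ENNReal.ofReal_prod_of_nonneg]
    · rw [hEdef, t, ← Finset.prod_mul_distrib]
    · intro k _
      exact mul_nonneg (Real.exp_pos _).le
        (div_nonneg (pow_nonneg (hlamnn _) _) (Nat.cast_nonneg _))
  set u : ℝ := ∏ k : Fin n, (γ / ((k.1 : ℝ) + 1)) ^ a k / ((a k).factorial : ℝ) with hu
  have hta : t lam a = α ^ n * u := by
    have h2 : t lam a = (∏ k : Fin n, α ^ ((k.1 + 1) * a k)) * u := by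
      rw [t, hu, ← Finset.prod_mul_distrib]
      refine Finset.prod_congr rfl fun k _ => ?_
      have h1 : lam (k.1 + 1) = α ^ (k.1 + 1) * (γ / ((k.1 : ℝ) + 1)) := by
        rw [hlam]; push_cast; ring
      rw [h1, mul_pow, ← pow_mul, mul_div_assoc]
    rw [h2, Finset.prod_pow_eq_pow_sum, ha]
  have hsetT : {b : Fin n → ℕ | (∑ k : Fin n, (k.1 + 1) * b k) = n}
      = ↑(T n n) := by
    ext b
    simp [mem_T]
  have hden : μ {b : Fin n → ℕ | (∑ k : Fin n, (k.1 + 1) * b k) = n}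
      = ENNReal.ofReal (E * c lam n n) := by
    rw [hsetT]
    have hcoe : (↑(T n n) : Set (Fin n → ℕ)) = ⋃ b ∈ T n n, {b} := by
      ext x; simp
    rw [hcoe, measure_biUnion_finset
      (fun x _ y _ hxy => Set.disjoint_singleton.2 hxy)
      (fun b _ => measurableSet_singleton b)]
    rw [Finset.sum_congr rfl fun b _ => hsingle b,
      ← ENNReal.ofReal_sum_of_nonneg (fun b _ => mul_nonneg hEpos.le (htnn b)),
      ← Finset.mul_sum]
    rfl
  have hcn : c lam n n = α ^ n * d γ n := by
    rw [hlam]; exact c_eq γ α n n le_rfl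
  have hP : (0:ℝ) < ∏ i ∈ Finset.range n, (γ + i) :=
    Finset.prod_pos fun i _ => add_pos_of_pos_of_nonneg hγ (Nat.cast_nonneg i)
  have hdn : 0 < d γ n :=
    div_pos hP (by exact_mod_cast n.factorial_pos)
  rw [hsingle a, hden, hta, hcn]
  rw [← ENNReal.ofReal_div_of_pos (by positivity : (0:ℝ) < E * (α ^ n * d γ n))]
  congr 1
  rw [d]
  have hE0 : E ≠ 0 := hEpos.ne'
  have hαn0 : α ^ n ≠ 0 := (pow_pos hα0 n).ne'
  have hP0 : (∏ i ∈ Finset.range n, (γ + i)) ≠ 0 := hP.ne'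
  have hfac0 : ((n.factorial : ℝ)) ≠ 0 := Nat.cast_ne_zero.2 n.factorial_ne_zero
  field_simp
end

section
/- Let λ, θ > 0 and set α := λ/(λ + θ). Define W_θ(y) := 1 + (λ/θ)(1 − e^{−θy}) for y ≥ 0. Then for every integer k ≥ 1, ∫₀^∞ θ e^{−θy} · W_θ(y)^{−2} · (1 − 1/W_θ(y))^{k−1} dy = (α^{−1} − 1) · α^k / k. -/
open MeasureTheory Real Filter Topology Set

/-! Since `θ e^{-θy} = (θ/λ) W_θ'(y)`, the integrand is `(θ/λ) u'(y) u(y)^{k-1}` for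
`u = 1 - 1/W_θ`, which increases from `u(0) = 0` to `u(∞) = 1 - θ/(λ+θ) = α`. Hence the
integral is `(θ/λ) α^k / k`, and `θ/λ = α⁻¹ - 1`. -/

theorem hasDerivAt_one_sub_inv_pow_div {W : ℝ → ℝ} {w y : ℝ} (hW : HasDerivAt W w y)
    (hy : W y ≠ 0) {k : ℕ} (hk : k ≠ 0) :
    HasDerivAt (fun y => (1 - 1 / W y) ^ k / k)
      (w * (W y)⁻¹ ^ 2 * (1 - 1 / W y) ^ (k - 1)) y := by
  have hu : HasDerivAt (fun y => 1 - 1 / W y) (w / W y ^ 2) y := by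
    simpa [one_div, neg_div] using (hW.inv hy).const_sub 1
  refine ((hu.fun_pow k).div_const (k : ℝ)).congr_deriv ?_
  have : (k : ℝ) ≠ 0 := Nat.cast_ne_zero.2 hk
  field_simp

theorem integral_Ioi_deriv_mul_inv_sq_mul_one_sub_inv_pow {W W' : ℝ → ℝ} {a L : ℝ}
    (hW : ∀ y ∈ Ici a, HasDerivAt W (W' y) y) (hW_one : ∀ y ∈ Ici a, 1 ≤ W y)
    (hW'_nonneg : ∀ y ∈ Ioi a, 0 ≤ W' y) (hL : Tendsto W atTop (𝓝 L)) (hL0 : L ≠ 0)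
    {k : ℕ} (hk : k ≠ 0) :
    ∫ y in Ioi a, W' y * (W y)⁻¹ ^ 2 * (1 - 1 / W y) ^ (k - 1)
      = ((1 - 1 / L) ^ k - (1 - 1 / W a) ^ k) / k := by
  have hW_ne : ∀ y ∈ Ici a, W y ≠ 0 := fun y hy => (zero_lt_one.trans_le (hW_one y hy)).ne'
  have hF : ∀ y ∈ Ici a, HasDerivAt (fun y => (1 - 1 / W y) ^ k / k)
      (W' y * (W y)⁻¹ ^ 2 * (1 - 1 / W y) ^ (k - 1)) y :=
    fun y hy => hasDerivAt_one_sub_inv_pow_div (hW y hy) (hW_ne y hy) hk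
  have hnonneg : ∀ y ∈ Ioi a, 0 ≤ W' y * (W y)⁻¹ ^ 2 * (1 - 1 / W y) ^ (k - 1) := by
    intro y hy
    have hWy := hW_one y (mem_Ici_of_Ioi hy)
    have : 0 ≤ 1 - 1 / W y := sub_nonneg.2 (div_le_one_of_le₀ hWy (zero_le_one.trans hWy))
    have := hW'_nonneg y hy
    positivity
  have hlim : Tendsto (fun y => (1 - 1 / W y) ^ k / k) atTop (𝓝 ((1 - 1 / L) ^ k / k)) := by
    simpa only [one_div] using (((hL.inv₀ hL0).const_sub 1).pow k).div_const (k : ℝ)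
  rw [integral_Ioi_of_hasDerivAt_of_nonneg (hF a self_mem_Ici).continuousAt.continuousWithinAt
    (fun y hy => hF y (mem_Ici_of_Ioi hy)) hnonneg hlim, sub_div]

noncomputable def clonalScale (lam θ y : ℝ) : ℝ := 1 + lam / θ * (1 - exp (-θ * y))

section clonalScale

variable {lam θ : ℝ}

theorem clonalScale_zero : clonalScale lam θ 0 = 1 := by simp [clonalScale]

theorem hasDerivAt_clonalScale (hθ : θ ≠ 0) (y : ℝ) :
    HasDerivAt (clonalScale lam θ) (lam * exp (-θ * y)) y := by
  refine (((((hasDerivAt_id' y).const_mul (-θ)).exp.const_sub 1).const_mul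
    (lam / θ)).const_add 1).congr_deriv ?_
  field_simp

theorem one_le_clonalScale (hlam : 0 ≤ lam) (hθ : 0 < θ) {y : ℝ} (hy : 0 ≤ y) :
    1 ≤ clonalScale lam θ y := by
  have : exp (-θ * y) ≤ 1 := exp_le_one_iff.2 (by nlinarith)
  have : 0 ≤ lam / θ * (1 - exp (-θ * y)) := mul_nonneg (by positivity) (by linarith)
  unfold clonalScale
  linarith

theorem tendsto_clonalScale_atTop (hθ : 0 < θ) :
    Tendsto (clonalScale lam θ) atTop (𝓝 (1 + lam / θ)) := by
  have hexp : Tendsto (fun y => exp (-θ * y)) atTop (𝓝 0) := by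
    simpa only [neg_mul, Function.comp_def, id] using
      tendsto_exp_neg_atTop_nhds_zero.comp (tendsto_id.const_mul_atTop hθ)
  have := ((hexp.const_sub 1).const_mul (lam / θ)).const_add 1
  rwa [sub_zero, mul_one] at this

end clonalScale

/-- for the mutation model on the critical linear birth–death process
with rate `λ` and mutation rate `θ`, with clonal scale function
`W_θ(y) = 1 + (λ/θ)(1 − e^{−θy})`, the limiting frequency of species of abundance `k`
is Fisher's log-series `(α⁻¹ − 1) α^k / k` with `α = λ/(λ+θ)`. -/
theorem mutation_model_fisher_log_series
    (lam θ : ℝ) (hlam : 0 < lam) (hθ : 0 < θ)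
    (α : ℝ) (hα : α = lam / (lam + θ))
    (Wθ : ℝ → ℝ) (hWθ : ∀ y : ℝ, Wθ y = 1 + (lam / θ) * (1 - Real.exp (-θ * y))) :
    ∀ k : ℕ, 1 ≤ k →
      (∫ y in Set.Ioi (0:ℝ),
          θ * Real.exp (-θ * y) * (Wθ y) ⁻¹ ^ 2 * (1 - 1 / Wθ y) ^ (k - 1))
        = (α⁻¹ - 1) * α ^ k / k := by
  intro k hk
  have hk0 : k ≠ 0 := by omega
  obtain rfl : Wθ = clonalScale lam θ := funext hWθ
  have hint := integral_Ioi_deriv_mul_inv_sq_mul_one_sub_inv_pow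
    (fun y _ => hasDerivAt_clonalScale hθ.ne' y) (fun y hy => one_le_clonalScale hlam.le hθ hy)
    (fun y _ => by positivity) (tendsto_clonalScale_atTop hθ) (by positivity) hk0
  calc _ = ∫ y in Ioi (0 : ℝ), θ / lam * (lam * exp (-θ * y) * (clonalScale lam θ y)⁻¹ ^ 2
          * (1 - 1 / clonalScale lam θ y) ^ (k - 1)) := by
        congr 1 with y
        field_simp
    _ = _ := by
      rw [integral_const_mul, hint, clonalScale_zero, hα]
      simp only [div_one, sub_self, zero_pow hk0, sub_zero]
      field_simp
      ring
end
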